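/- arXiv:2112.02871 — 5 statements merged into one kernel-verified Lean document; each statement's English description precedes it below -/
import Mathlib

section
/- Let F : (0,∞) → (0,∞). Then the function t ↦ t·F(t) is non-decreasing on (0,∞) if and only if for every ε ≥ 0 the function t ↦ t·F(√(ε + t²)) is non-decreasing on (0,∞). -/
/-- Remark 1: condition (C3) is equivalent to the fact that for all `ε ≥ 0`,
the function `t ↦ t * F (√(ε + t²))` is non-decreasing on `(0, ∞)`. -/
theorem stmt_0 (F : ℝ → ℝ) (hF : ∀ t : ℝ, 0 < t → 0 < F t) :
    MonotoneOn (fun t : ℝ => t * F t) (Set.Ioi 0) ↔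
      ∀ ε : ℝ, 0 ≤ ε →
        MonotoneOn (fun t : ℝ => t * F (Real.sqrt (ε + t ^ 2))) (Set.Ioi 0) := by
  constructor
  · intro h ε hε s hs t ht hst
    simp only [Set.mem_Ioi] at hs ht
    have has : 0 < ε + s ^ 2 := by positivity
    have hat : 0 < ε + t ^ 2 := by positivity
    set a := Real.sqrt (ε + s ^ 2) with ha
    set b := Real.sqrt (ε + t ^ 2) with hb
    have ha0 : 0 < a := Real.sqrt_pos.2 has
    have hb0 : 0 < b := Real.sqrt_pos.2 hat
    have ha2 : a ^ 2 = ε + s ^ 2 := Real.sq_sqrt has.le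
    have hb2 : b ^ 2 = ε + t ^ 2 := Real.sq_sqrt hat.le
    have hab : a ≤ b := Real.sqrt_le_sqrt (by nlinarith)
    have key : a * F a ≤ b * F b := h (Set.mem_Ioi.2 ha0) (Set.mem_Ioi.2 hb0) hab
    have hdiv : s / a ≤ t / b := by
      rw [div_le_div_iff₀ ha0 hb0]
      have hsq : (s * b) ^ 2 ≤ (t * a) ^ 2 := by
        have : (s*b)^2 = s^2 * (ε + t^2) := by rw [← hb2]; ring
        have : (t*a)^2 = t^2 * (ε + s^2) := by rw [← ha2]; ring
        nlinarith [mul_nonneg hε (sq_nonneg t), mul_nonneg hε (sq_nonneg s), mul_nonneg hε (mul_nonneg hs.le ht.le)]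
      nlinarith [mul_pos hs hb0, mul_pos ht ha0]
    have e1 : s * F a = (s / a) * (a * F a) := by field_simp
    have e2 : t * F b = (t / b) * (b * F b) := by field_simp
    show s * F a ≤ t * F b
    rw [e1, e2]
    have hFa : 0 < F a := hF a ha0
    exact mul_le_mul hdiv key (by positivity) (by positivity)
  · intro h
    have h0 := h 0 le_rfl
    intro s hs t ht hst
    simp only [Set.mem_Ioi] at hs ht
    have := h0 (Set.mem_Ioi.2 hs) (Set.mem_Ioi.2 ht) hst
    simpa [Real.sqrt_sq hs.le, Real.sqrt_sq ht.le] using this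
end

section
/- Let F : (0,∞) → (0,∞) be continuous with t ↦ t·F(t) non-decreasing on (0,∞), let ε > 0 and t ≥ 0. Then ∫₀ᵗ s·F(s) ds ≤ ε·F(√ε) + G_ε(√(t² + 2√ε·t)), where G_ε(Y) = ∫₀^Y y·F(√(ε + y²)) dy. -/
/-- Pointwise inequality of Lemma 4.2: for `F : (0,∞) → (0,∞)` continuous with
`t ↦ t * F t` non-decreasing on `(0,∞)`, `ε > 0` and `t ≥ 0`,
`∫₀ᵗ s * F s ds ≤ ε * F (√ε) + G_ε (√(t² + 2 √ε t))`, where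
`G_ε (Y) = ∫₀^Y y * F (√(ε + y²)) dy`. -/
theorem stmt_7 (F : ℝ → ℝ) (hF : ∀ t : ℝ, 0 < t → 0 < F t)
    (hFcont : ContinuousOn F (Set.Ioi 0))
    (hC3 : MonotoneOn (fun t : ℝ => t * F t) (Set.Ioi 0))
    (ε : ℝ) (hε : 0 < ε) (t : ℝ) (ht : 0 ≤ t) :
    (∫ s in (0 : ℝ)..t, s * F s) ≤
      ε * F (Real.sqrt ε) +
        ∫ y in (0 : ℝ)..Real.sqrt (t ^ 2 + 2 * Real.sqrt ε * t),
          y * F (Real.sqrt (ε + y ^ 2)) := by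
  set c : ℝ := Real.sqrt ε with hcdef
  have hc : 0 < c := Real.sqrt_pos.mpr hε
  have hc2 : c ^ 2 = ε := Real.sq_sqrt hε.le
  set Y : ℝ := Real.sqrt (t ^ 2 + 2 * c * t) with hYdef
  have hYnn : 0 ≤ Y := Real.sqrt_nonneg _
  have hY2 : Y ^ 2 = t ^ 2 + 2 * c * t := by
    rw [hYdef, Real.sq_sqrt]; positivity
  -- the change-of-variables map
  set f : ℝ → ℝ := fun y => Real.sqrt (ε + y ^ 2) with hfdef
  have hfpos : ∀ y : ℝ, 0 < ε + y ^ 2 := fun y => by positivity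
  have hfval : ∀ y : ℝ, 0 < f y := fun y => Real.sqrt_pos.mpr (hfpos y)
  have hderiv : ∀ y : ℝ, HasDerivAt f (y / f y) y := by
    intro y
    have h1 : HasDerivAt (fun y : ℝ => ε + y ^ 2) (2 * y) y := by
      simpa using ((hasDerivAt_pow 2 y).const_add ε)
    have h2 := h1.sqrt (ne_of_gt (hfpos y))
    have : 2 * y / (2 * Real.sqrt (ε + y ^ 2)) = y / f y := by
      rw [mul_div_mul_left _ _ (two_ne_zero)]
    rwa [this] at h2
  have hg : ContinuousOn (fun u : ℝ => u * F u) (Set.Ioi 0) :=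
    continuousOn_id.mul hFcont
  -- substitution: G_ε(Y) = ∫_c^{t+c} u F u du
  have hf0 : f 0 = c := by simp [hfdef, hcdef]
  have hfY : f Y = t + c := by
    have h2 : ε + Y ^ 2 = (t + c) ^ 2 := by rw [hY2]; ring_nf; linarith [hc2]
    show Real.sqrt (ε + Y ^ 2) = t + c
    rw [h2, Real.sqrt_sq (by positivity)]
  have hsub : (∫ y in (0:ℝ)..Y, y * F (Real.sqrt (ε + y ^ 2)))
      = ∫ u in c..(t + c), u * F u := by
    have key := intervalIntegral.integral_comp_smul_deriv'
      (f := f) (f' := fun y => y / f y) (g := fun u => u * F u) (a := (0:ℝ)) (b := Y)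
      (fun x _ => hderiv x)
      (ContinuousOn.div continuousOn_id
        (Real.continuous_sqrt.comp (by continuity)).continuousOn
        (fun x _ => ne_of_gt (hfval x)))
      (hg.mono (by rintro u ⟨y, -, rfl⟩; exact hfval y))
    rw [hf0, hfY] at key
    rw [← key]
    apply intervalIntegral.integral_congr
    intro y _
    have h := hfval y
    simp only [Function.comp, smul_eq_mul, hfdef]
    field_simp
  rw [hsub]
  -- shift: ∫_c^{t+c} u F u du = ∫_0^t (s+c) F(s+c) ds
  have hshift : (∫ u in c..(t + c), u * F u)
      = ∫ s in (0:ℝ)..t, (s + c) * F (s + c) := by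
    rw [intervalIntegral.integral_comp_add_right (fun u => u * F u) c, zero_add]
  rw [hshift]
  -- integrability of s ↦ s F s on [0, t]
  have hIl : IntervalIntegrable (fun s => s * F s) MeasureTheory.volume 0 t := by
    rw [intervalIntegrable_iff_integrableOn_Ioc_of_le ht]
    rcases eq_or_lt_of_le ht with h | h
    · simp [← h]
    refine MeasureTheory.Integrable.mono'
      ((MeasureTheory.integrableOn_const_iff).mpr (Or.inr (by simp)) : MeasureTheory.IntegrableOn
        (fun _ => t * F t) (Set.Ioc 0 t) MeasureTheory.volume)
      ((hg.mono Set.Ioc_subset_Ioi_self).aestronglyMeasurable measurableSet_Ioc) ?_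
    refine MeasureTheory.ae_restrict_of_forall_mem measurableSet_Ioc ?_
    intro s hs
    have hs0 : 0 < s := hs.1
    have hb := hC3 (Set.mem_Ioi.mpr hs0) (Set.mem_Ioi.mpr h) hs.2
    have hpos : 0 < s * F s := mul_pos hs0 (hF s hs0)
    calc ‖s * F s‖ = s * F s := by rw [Real.norm_eq_abs, abs_of_pos hpos]
      _ ≤ t * F t := hb
  have hIr : IntervalIntegrable (fun s => (s + c) * F (s + c)) MeasureTheory.volume 0 t := by
    apply ContinuousOn.intervalIntegrable
    apply (hg.comp (by fun_prop : ContinuousOn (fun s : ℝ => s + c) (Set.uIcc 0 t)))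
    intro s hs
    rw [Set.uIcc_of_le ht] at hs
    exact Set.mem_Ioi.mpr (show (0:ℝ) < s + c by linarith [hs.1])
  -- pointwise comparison
  have hmono : (∫ s in (0:ℝ)..t, s * F s) ≤ ∫ s in (0:ℝ)..t, (s + c) * F (s + c) := by
    apply intervalIntegral.integral_mono_on ht hIl hIr
    intro s hs
    rcases eq_or_lt_of_le hs.1 with h | h
    · rw [← h, zero_mul]
      have hpc : 0 < (0:ℝ) + c := by linarith
      exact le_of_lt (mul_pos hpc (hF _ hpc))
    · exact hC3 (Set.mem_Ioi.mpr h) (Set.mem_Ioi.mpr (by linarith)) (by linarith)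
  have hεF : 0 ≤ ε * F c := le_of_lt (mul_pos hε (hF c hc))
  linarith
end

section
/- Let T₁ ∈ ℝ, C > 0 and α ∈ (0,1]. Let y : [T₁, ∞) → ℝ be continuous with y(t) ≥ 0 for all t ≥ T₁, and suppose that at every point t ≥ T₁ with y(t) > 0, y is differentiable at t with y'(t) ≤ -C·y(t)^{1-α}. Then y(t) = 0 for every t ≥ T₁ + y(T₁)^α / (C·α). In particular there exists a finite time T₀ such that y vanishes identically on [T₀, ∞). -/
/-!
While `y > 0`, the chain rule turns `y' ≤ -C y ^ (1 - α)` into `(y ^ α)' ≤ -C α`, so `z = y ^ α`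
decreases at least linearly with slope `C α`. Positivity is only known where `z > 0`, so the
comparison is run backwards from a time `t`: take the last `s ≤ t` at which `z s ≤ C α (t - s)`
(the starting time qualifies once `t ≥ T₁ + z T₁ / (C α)`). On `(s, t)` the function `z` is
positive, and the mean value theorem gives `z t ≤ z s - C α (t - s) ≤ 0`.
-/

open Set

theorem sub_le_neg_mul_sub_of_hasDerivAt_le {z : ℝ → ℝ} {k s t : ℝ} (hst : s ≤ t)
    (hc : ContinuousOn z (Icc s t)) (hd : ∀ u ∈ Ioo s t, ∃ d, HasDerivAt z d u ∧ d ≤ -k) :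
    z t - z s ≤ -k * (t - s) := by
  choose! z' hz' hz'le using hd
  refine (convex_Icc s t).image_sub_le_mul_sub_of_deriv_le hc ?_ ?_ s
    (left_mem_Icc.2 hst) t (right_mem_Icc.2 hst) hst
  · rw [interior_Icc]
    exact fun u hu => (hz' u hu).differentiableAt.differentiableWithinAt
  · rw [interior_Icc]
    intro u hu
    rw [(hz' u hu).deriv]
    exact hz'le u hu

theorem eq_zero_of_hasDerivAt_le_neg {z : ℝ → ℝ} {a k : ℝ} (hk : 0 < k)
    (hc : ContinuousOn z (Ici a)) (hnn : ∀ t, a ≤ t → 0 ≤ z t)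
    (hd : ∀ t, a ≤ t → 0 < z t → ∃ d, HasDerivAt z d t ∧ d ≤ -k)
    {t : ℝ} (ht : a + z a / k ≤ t) : z t = 0 := by
  have hat : a ≤ t := le_trans (le_add_of_nonneg_right (div_nonneg (hnn a le_rfl) hk.le)) ht
  have hcIcc : ContinuousOn z (Icc a t) := hc.mono Icc_subset_Ici_self
  set E := {u ∈ Icc a t | z u ≤ k * (t - u)}
  have haE : a ∈ E := ⟨left_mem_Icc.2 hat, (div_le_iff₀' hk).1 (by linarith)⟩
  have hEcompact : IsCompact E :=
    isCompact_Icc.of_isClosed_subset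
      (isClosed_Icc.isClosed_le hcIcc
        (continuousOn_const.mul (continuousOn_const.sub continuousOn_id)))
      (sep_subset _ _)
  obtain ⟨⟨has, hst⟩, hzs⟩ : sSup E ∈ E := hEcompact.sSup_mem ⟨a, haE⟩
  have hpos : ∀ u ∈ Ioo (sSup E) t, 0 < z u := by
    intro u hu
    have hu_notin : u ∉ E := fun huE => (le_csSup hEcompact.bddAbove huE).not_gt hu.1
    have hzu : k * (t - u) < z u := by
      by_contra! h
      exact hu_notin ⟨⟨has.trans hu.1.le, hu.2.le⟩, h⟩
    exact lt_of_le_of_lt (mul_nonneg hk.le (sub_nonneg.2 hu.2.le)) hzu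
  have hdrop := sub_le_neg_mul_sub_of_hasDerivAt_le hst (hc.mono fun u hu => has.trans hu.1)
    fun u hu => hd u (has.trans hu.1.le) (hpos u hu)
  exact le_antisymm (by linarith) (hnn t hat)

theorem exists_hasDerivAt_rpow_le_neg_mul {y : ℝ → ℝ} {C α d t : ℝ} (hα : 0 ≤ α)
    (hy : 0 < y t) (hd : HasDerivAt y d t) (hle : d ≤ -C * y t ^ (1 - α)) :
    ∃ d', HasDerivAt (fun s => y s ^ α) d' t ∧ d' ≤ -(C * α) := by
  refine ⟨d * α * y t ^ (α - 1), hd.rpow_const (Or.inl hy.ne'), ?_⟩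
  have hcancel : y t ^ (1 - α) * y t ^ (α - 1) = 1 := by
    rw [← Real.rpow_add hy, sub_add_sub_cancel', sub_self, Real.rpow_zero]
  calc d * α * y t ^ (α - 1) = d * (α * y t ^ (α - 1)) := by ring
    _ ≤ -C * y t ^ (1 - α) * (α * y t ^ (α - 1)) :=
        mul_le_mul_of_nonneg_right hle (mul_nonneg hα (Real.rpow_nonneg hy.le _))
    _ = -(C * α) * (y t ^ (1 - α) * y t ^ (α - 1)) := by ring
    _ = -(C * α) := by rw [hcancel, mul_one]

/-- The differential-inequality argument of Theorem 3.2: a continuous non-negative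
function `y` on `[T₁, ∞)` satisfying `y' ≤ -C * y ^ (1 - α)` wherever it is positive
vanishes identically from the time `T₁ + y T₁ ^ α / (C * α)` on; in particular it
vanishes identically after some finite time `T₀`. -/
theorem stmt_9 (T₁ C α : ℝ) (hC : 0 < C) (hα : α ∈ Set.Ioc (0 : ℝ) 1)
    (y : ℝ → ℝ) (hycont : ContinuousOn y (Set.Ici T₁))
    (hynonneg : ∀ t : ℝ, T₁ ≤ t → 0 ≤ y t)
    (hyderiv : ∀ t : ℝ, T₁ ≤ t → 0 < y t →
      ∃ d : ℝ, HasDerivAt y d t ∧ d ≤ -C * y t ^ (1 - α)) :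
    (∀ t : ℝ, T₁ + y T₁ ^ α / (C * α) ≤ t → y t = 0) ∧
      ∃ T₀ : ℝ, ∀ t : ℝ, T₀ ≤ t → y t = 0 := by
  have hα0 : 0 < α := hα.1
  have hzderiv : ∀ t, T₁ ≤ t → 0 < y t ^ α →
      ∃ d, HasDerivAt (fun s => y s ^ α) d t ∧ d ≤ -(C * α) := by
    intro t ht hzt
    have hyt : 0 < y t := (hynonneg t ht).lt_of_ne fun h => by
      simp [← h, Real.zero_rpow hα0.ne'] at hzt
    obtain ⟨d, hd, hle⟩ := hyderiv t ht hyt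
    exact exists_hasDerivAt_rpow_le_neg_mul hα0.le hyt hd hle
  have hvanish : ∀ t, T₁ + y T₁ ^ α / (C * α) ≤ t → y t = 0 := by
    intro t ht
    have hT₁t : T₁ ≤ t := le_trans (le_add_of_nonneg_right
      (div_nonneg (Real.rpow_nonneg (hynonneg T₁ le_rfl) α) (mul_pos hC hα0).le)) ht
    refine (Real.rpow_eq_zero (hynonneg t hT₁t) hα0.ne').1 ?_
    exact eq_zero_of_hasDerivAt_le_neg (z := fun s => y s ^ α) (mul_pos hC hα0)
      (hycont.rpow_const fun _ _ => Or.inr hα0.le)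
      (fun s hs => Real.rpow_nonneg (hynonneg s hs) α) hzderiv ht
  exact ⟨hvanish, _, hvanish⟩
end

section
/- Let E be a real normed vector space, let F : (0,∞) → (0,∞) be continuous with t ↦ t·F(t) non-decreasing on (0,∞), and let ε > 0. Then the function v ↦ G_ε(‖v‖) is convex on E, where G_ε(t) = ∫₀ᵗ s·F(√(ε + s²)) ds. -/
/-- Pointwise convexity underlying Lemma 2.1: for a real normed vector space `E`,
`F : (0,∞) → (0,∞)` continuous with `t ↦ t * F t` non-decreasing on `(0,∞)`, and
`ε > 0`, the function `v ↦ G_ε (‖v‖)` is convex on `E`. -/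
theorem stmt_15 (E : Type*) [NormedAddCommGroup E] [NormedSpace ℝ E]
    (F : ℝ → ℝ) (hF : ∀ t : ℝ, 0 < t → 0 < F t)
    (hFcont : ContinuousOn F (Set.Ioi 0))
    (hC3 : MonotoneOn (fun t : ℝ => t * F t) (Set.Ioi 0))
    (ε : ℝ) (hε : 0 < ε) :
    ConvexOn ℝ Set.univ
      (fun v : E => ∫ s in (0 : ℝ)..‖v‖, s * F (Real.sqrt (ε + s ^ 2))) := by
  set g : ℝ → ℝ := fun s => s * F (Real.sqrt (ε + s ^ 2)) with hg
  set G : ℝ → ℝ := fun t => ∫ s in (0 : ℝ)..t, g s with hGdef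
  have hpos : ∀ s : ℝ, 0 < Real.sqrt (ε + s ^ 2) := fun s =>
    Real.sqrt_pos.2 (by positivity)
  have hsq : ∀ s : ℝ, Real.sqrt (ε + s ^ 2) ^ 2 = ε + s ^ 2 := fun s =>
    Real.sq_sqrt (by positivity)
  have hgcont : Continuous g := by
    have h1 : Continuous fun s : ℝ => Real.sqrt (ε + s ^ 2) := by
      exact Real.continuous_sqrt.comp (by continuity)
    have h2 : ContinuousOn (fun s : ℝ => F (Real.sqrt (ε + s ^ 2))) Set.univ :=
      hFcont.comp h1.continuousOn (fun s _ => hpos s)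
    rw [← continuousOn_univ]
    exact continuousOn_id.mul h2
  -- monotonicity of g on Ici 0
  have hgmono : MonotoneOn g (Set.Ici (0 : ℝ)) := by
    intro a ha b hb hab
    simp only [Set.mem_Ici] at ha hb
    have hua : 0 < Real.sqrt (ε + a ^ 2) := hpos a
    have hub : 0 < Real.sqrt (ε + b ^ 2) := hpos b
    have huab : Real.sqrt (ε + a ^ 2) ≤ Real.sqrt (ε + b ^ 2) :=
      Real.sqrt_le_sqrt (by nlinarith)
    have hdiv : a / Real.sqrt (ε + a ^ 2) ≤ b / Real.sqrt (ε + b ^ 2) := by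
      rw [div_le_div_iff₀ hua hub]
      have h2 : (a * Real.sqrt (ε + b ^ 2)) ^ 2 ≤ (b * Real.sqrt (ε + a ^ 2)) ^ 2 := by
        rw [mul_pow, mul_pow, hsq a, hsq b]
        nlinarith [mul_nonneg hε.le (mul_nonneg (sub_nonneg.2 hab) (add_nonneg hb ha))]
      exact le_of_pow_le_pow_left₀ two_ne_zero (by positivity) h2
    have hC : Real.sqrt (ε + a ^ 2) * F (Real.sqrt (ε + a ^ 2)) ≤
        Real.sqrt (ε + b ^ 2) * F (Real.sqrt (ε + b ^ 2)) := hC3 hua hub huab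
    have hga : g a = (a / Real.sqrt (ε + a ^ 2)) *
        (Real.sqrt (ε + a ^ 2) * F (Real.sqrt (ε + a ^ 2))) := by
      rw [hg]; field_simp
    have hgb : g b = (b / Real.sqrt (ε + b ^ 2)) *
        (Real.sqrt (ε + b ^ 2) * F (Real.sqrt (ε + b ^ 2))) := by
      rw [hg]; field_simp
    rw [hga, hgb]
    exact mul_le_mul hdiv hC (mul_nonneg hua.le (hF _ hua).le) (div_nonneg hb hub.le)
  have hgnn : ∀ s : ℝ, 0 ≤ s → 0 ≤ g s := fun s hs =>
    mul_nonneg hs (hF _ (hpos s)).le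
  -- G monotone on Ici 0
  have hGmono : MonotoneOn G (Set.Ici (0 : ℝ)) := by
    intro a ha b hb hab
    simp only [Set.mem_Ici] at ha hb
    have hsplit : G a + ∫ s in a..b, g s = G b :=
      intervalIntegral.integral_add_adjacent_intervals
        (hgcont.intervalIntegrable 0 a) (hgcont.intervalIntegrable a b)
    have hnn : 0 ≤ ∫ s in a..b, g s :=
      intervalIntegral.integral_nonneg hab (fun s hs => hgnn s (ha.trans hs.1))
    linarith
  -- G convex on Ici 0
  have hGconv : ConvexOn ℝ (Set.Ici (0 : ℝ)) G := by
    apply MonotoneOn.convexOn_of_deriv (convex_Ici 0)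
    · exact fun t _ => ((hgcont.integral_hasStrictDerivAt 0 t).hasDerivAt.continuousAt).continuousWithinAt
    · exact fun t _ => ((hgcont.integral_hasStrictDerivAt 0 t).hasDerivAt.differentiableAt).differentiableWithinAt
    · intro a ha b hb hab
      rw [interior_Ici] at ha hb
      rw [Continuous.deriv_integral g hgcont 0 a, Continuous.deriv_integral g hgcont 0 b]
      exact hgmono (Set.mem_Ici.2 (le_of_lt ha)) (Set.mem_Ici.2 (le_of_lt hb)) hab
  -- conclude
  refine ⟨convex_univ, fun x _ y _ a b ha hb hab => ?_⟩
  have h1 : ‖a • x + b • y‖ ≤ a * ‖x‖ + b * ‖y‖ := by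
    calc ‖a • x + b • y‖ ≤ ‖a • x‖ + ‖b • y‖ := norm_add_le _ _
    _ = a * ‖x‖ + b * ‖y‖ := by
        rw [norm_smul, norm_smul, Real.norm_of_nonneg ha, Real.norm_of_nonneg hb]
  have h2 : G ‖a • x + b • y‖ ≤ G (a * ‖x‖ + b * ‖y‖) :=
    hGmono (Set.mem_Ici.2 (norm_nonneg _)) (Set.mem_Ici.2 (by positivity)) h1
  have h3 : G (a • ‖x‖ + b • ‖y‖) ≤ a • G ‖x‖ + b • G ‖y‖ :=
    hGconv.2 (Set.mem_Ici.2 (norm_nonneg x)) (Set.mem_Ici.2 (norm_nonneg y)) ha hb hab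
  simpa using h2.trans (by simpa using h3)
end

section
/- Let E be a real inner product space, let F : (0,∞) → (0,∞) be continuous with t ↦ t·F(t) non-decreasing on (0,∞), and let ε > 0. Then for all v, w ∈ E, G_ε(‖w‖) - G_ε(‖v‖) ≥ F(√(ε + ‖v‖²)) · ⟨v, w - v⟩, where G_ε(t) = ∫₀ᵗ s·F(√(ε + s²)) ds and ⟨·,·⟩ is the inner product of E. -/
open scoped RealInnerProductSpace

/-- Pointwise subgradient inequality (eq:conv): for a real inner product space `E`,
`F : (0,∞) → (0,∞)` continuous with `t ↦ t * F t` non-decreasing on `(0,∞)`, and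
`ε > 0`, for all `v, w ∈ E`,
`G_ε (‖w‖) - G_ε (‖v‖) ≥ F (√(ε + ‖v‖²)) * ⟪v, w - v⟫`. -/
theorem stmt_16 (E : Type*) [NormedAddCommGroup E] [InnerProductSpace ℝ E]
    (F : ℝ → ℝ) (hF : ∀ t : ℝ, 0 < t → 0 < F t)
    (hFcont : ContinuousOn F (Set.Ioi 0))
    (hC3 : MonotoneOn (fun t : ℝ => t * F t) (Set.Ioi 0))
    (ε : ℝ) (hε : 0 < ε) (v w : E) :
    F (Real.sqrt (ε + ‖v‖ ^ 2)) * ⟪v, w - v⟫ ≤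
      (∫ s in (0 : ℝ)..‖w‖, s * F (Real.sqrt (ε + s ^ 2))) -
        ∫ s in (0 : ℝ)..‖v‖, s * F (Real.sqrt (ε + s ^ 2)) := by
  set g : ℝ → ℝ := fun s => s * F (Real.sqrt (ε + s ^ 2)) with hg
  have hσpos : ∀ s : ℝ, 0 < Real.sqrt (ε + s ^ 2) := fun s =>
    Real.sqrt_pos.mpr (by positivity)
  have hgcont : Continuous g := by
    apply continuous_id.mul
    exact hFcont.comp_continuous (by continuity) (fun s => hσpos s)
  have hgint : ∀ a b : ℝ, IntervalIntegrable g MeasureTheory.volume a b :=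
    fun a b => hgcont.intervalIntegrable a b
  have hgmono : MonotoneOn g (Set.Ici 0) := by
    intro a ha b hb hab
    simp only [hg, Set.mem_Ici] at *
    have hσa := hσpos a; have hσb := hσpos b
    have hsa : Real.sqrt (ε + a ^ 2) ^ 2 = ε + a ^ 2 :=
      Real.sq_sqrt (by positivity)
    have hsb : Real.sqrt (ε + b ^ 2) ^ 2 = ε + b ^ 2 :=
      Real.sq_sqrt (by positivity)
    have h1 : Real.sqrt (ε + a ^ 2) ≤ Real.sqrt (ε + b ^ 2) := by
      apply Real.sqrt_le_sqrt; nlinarith [pow_le_pow_left₀ ha hab 2, hε.le]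
    have h2 : Real.sqrt (ε + a ^ 2) * F (Real.sqrt (ε + a ^ 2)) ≤
        Real.sqrt (ε + b ^ 2) * F (Real.sqrt (ε + b ^ 2)) := hC3 hσa hσb h1
    have h3 : a / Real.sqrt (ε + a ^ 2) ≤ b / Real.sqrt (ε + b ^ 2) := by
      rw [div_le_div_iff₀ hσa hσb]
      have e1 : Real.sqrt (a ^ 2 * (ε + b ^ 2)) = a * Real.sqrt (ε + b ^ 2) := by
        rw [Real.sqrt_mul (sq_nonneg a), Real.sqrt_sq ha]
      have e2 : Real.sqrt (b ^ 2 * (ε + a ^ 2)) = b * Real.sqrt (ε + a ^ 2) := by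
        rw [Real.sqrt_mul (sq_nonneg b), Real.sqrt_sq hb]
      have e3 : Real.sqrt (a ^ 2 * (ε + b ^ 2)) ≤ Real.sqrt (b ^ 2 * (ε + a ^ 2)) := by
        apply Real.sqrt_le_sqrt; nlinarith [pow_le_pow_left₀ ha hab 2, hε.le]
      linarith [e3, e1, e2]
    have hposa : 0 < Real.sqrt (ε + a ^ 2) * F (Real.sqrt (ε + a ^ 2)) :=
      mul_pos hσa (hF _ hσa)
    have ha' : a * F (Real.sqrt (ε + a ^ 2)) =
        (a / Real.sqrt (ε + a ^ 2)) * (Real.sqrt (ε + a ^ 2) * F (Real.sqrt (ε + a ^ 2))) := by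
      field_simp
    have hb' : b * F (Real.sqrt (ε + b ^ 2)) =
        (b / Real.sqrt (ε + b ^ 2)) * (Real.sqrt (ε + b ^ 2) * F (Real.sqrt (ε + b ^ 2))) := by
      field_simp
    rw [ha', hb']
    exact mul_le_mul h3 h2 hposa.le (div_nonneg hb hσb.le)
  have key : ∀ a b : ℝ, 0 ≤ a → 0 ≤ b →
      g a * (b - a) ≤ (∫ s in (0 : ℝ)..b, g s) - ∫ s in (0 : ℝ)..a, g s := by
    intro a b ha hb
    have heq : (∫ s in (0 : ℝ)..b, g s) - ∫ s in (0 : ℝ)..a, g s = ∫ s in a..b, g s := by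
      rw [intervalIntegral.integral_interval_sub_left (hgint 0 b) (hgint 0 a)]
    rw [heq]
    rcases le_total a b with h | h
    · calc g a * (b - a) = ∫ _ in a..b, g a := by
            rw [intervalIntegral.integral_const, smul_eq_mul]; ring
        _ ≤ ∫ s in a..b, g s :=
            intervalIntegral.integral_mono_on h intervalIntegrable_const (hgint a b)
              (fun x hx => hgmono ha (le_trans ha hx.1) hx.1)
    · have h1 : ∫ s in b..a, g s ≤ ∫ _ in b..a, g a :=
        intervalIntegral.integral_mono_on h (hgint b a) intervalIntegrable_const
          (fun x hx => hgmono (le_trans hb hx.1) ha hx.2)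
      rw [intervalIntegral.integral_const, smul_eq_mul] at h1
      rw [intervalIntegral.integral_symm]
      linarith
  have hinner : ⟪v, w - v⟫ ≤ ‖v‖ * ‖w‖ - ‖v‖ ^ 2 := by
    rw [inner_sub_right, real_inner_self_eq_norm_sq]
    have := real_inner_le_norm v w
    linarith
  have hFpos : 0 < F (Real.sqrt (ε + ‖v‖ ^ 2)) := hF _ (hσpos _)
  have h1 : F (Real.sqrt (ε + ‖v‖ ^ 2)) * ⟪v, w - v⟫ ≤ g ‖v‖ * (‖w‖ - ‖v‖) := by
    have heq : g ‖v‖ * (‖w‖ - ‖v‖) =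
        F (Real.sqrt (ε + ‖v‖ ^ 2)) * (‖v‖ * ‖w‖ - ‖v‖ ^ 2) := by
      simp only [hg]; ring
    rw [heq]
    exact mul_le_mul_of_nonneg_left hinner hFpos.le
  have h2 := key ‖v‖ ‖w‖ (norm_nonneg v) (norm_nonneg w)
  linarith
end
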